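/- For all x, y ∈ 𝔤_CM one has d(x,y) ≤ (1 + (C(ω)/2) · min(‖x‖, ‖y‖)) · ‖y − x‖; in particular d(e,x) ≤ ‖x‖ for every x ∈ 𝔤_CM. -/

import Mathlib

open MeasureTheory

/-- The Hilbert norm `‖(A,a)‖ = √(‖A‖² + ‖a‖²)` on `𝔤_CM = H × 𝐂`. -/
noncomputable def gNorm {H C : Type*} [NormedAddCommGroup H] [NormedAddCommGroup C]
    (p : H × C) : ℝ :=
  Real.sqrt (‖p.1‖ ^ 2 + ‖p.2‖ ^ 2)

/-- The length of the `C¹` path `s ↦ (w s, c s)`, `0 ≤ s ≤ 1`, with respect to the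
left invariant Riemannian metric on the Heisenberg type group determined by `ω`. -/
noncomputable def pathLen {H C : Type*} [NormedAddCommGroup H] [InnerProductSpace ℝ H]
    [NormedAddCommGroup C] [InnerProductSpace ℝ C]
    (ω : H →L[ℝ] H →L[ℝ] C) (w : ℝ → H) (c : ℝ → C) : ℝ :=
  ∫ s in (0:ℝ)..1,
    Real.sqrt (‖deriv w s‖ ^ 2 + ‖deriv c s - (2:ℝ)⁻¹ • ω (w s) (deriv w s)‖ ^ 2)

/-- The left invariant Riemannian distance on `𝔤_CM = H × 𝐂`. -/
noncomputable def dCM {H C : Type*} [NormedAddCommGroup H] [InnerProductSpace ℝ H]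
    [NormedAddCommGroup C] [InnerProductSpace ℝ C]
    (ω : H →L[ℝ] H →L[ℝ] C) (x y : H × C) : ℝ :=
  sInf {L : ℝ | ∃ w : ℝ → H, ∃ c : ℝ → C, ContDiff ℝ 1 w ∧ ContDiff ℝ 1 c ∧
    w 0 = x.1 ∧ c 0 = x.2 ∧ w 1 = y.1 ∧ c 1 = y.2 ∧ L = pathLen ω w c}

/-!
Compare `d(x, y)` with the length of the straight segment `s ↦ x + s (y - x)`. Since `ω` is
alternating, `ω(w(s), w'(s)) = ω(x₁, y₁ - x₁)` along it, so its speed is the constant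
`‖(y₁ - x₁, y₂ - x₂ - ½ ω(x₁, y₁ - x₁))‖ ≤ ‖y - x‖ + ½ ‖ω(x₁, y₁ - x₁)‖`. The last term may
be computed at `y₁` instead of `x₁`, which yields the factor `min(‖x‖, ‖y‖)`.
-/

section

variable {H C : Type*} [NormedAddCommGroup H] [NormedAddCommGroup C]

lemma gNorm_nonneg (p : H × C) : 0 ≤ gNorm p := Real.sqrt_nonneg _

@[simp] lemma gNorm_zero : gNorm (0 : H × C) = 0 := by simp [gNorm]

lemma norm_fst_le_gNorm (p : H × C) : ‖p.1‖ ≤ gNorm p :=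
  Real.le_sqrt_of_sq_le (le_add_of_nonneg_right (sq_nonneg _))

lemma sqrt_sq_add_norm_sub_sq_le (r : ℝ) (a v : C) :
    Real.sqrt (r ^ 2 + ‖a - v‖ ^ 2) ≤ Real.sqrt (r ^ 2 + ‖a‖ ^ 2) + ‖v‖ := by
  have h_sqrt_sq : Real.sqrt (r ^ 2 + ‖a‖ ^ 2) ^ 2 = r ^ 2 + ‖a‖ ^ 2 :=
    Real.sq_sqrt (by positivity)
  have h_norm_le : ‖a‖ ≤ Real.sqrt (r ^ 2 + ‖a‖ ^ 2) :=
    Real.le_sqrt_of_sq_le (le_add_of_nonneg_left (sq_nonneg _))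
  refine Real.sqrt_le_iff.mpr ⟨by positivity, ?_⟩
  nlinarith [norm_sub_le a v, norm_nonneg (a - v), norm_nonneg v]

variable [NormedSpace ℝ H] [NormedSpace ℝ C] (ω : H →L[ℝ] H →L[ℝ] C)

lemma apply_self_eq_zero_of_skew (hskew : ∀ A B : H, ω A B = - ω B A) (A : H) : ω A A = 0 := by
  have h_two : (2:ℝ) • ω A A = 0 := by
    rw [two_smul]; nth_rewrite 1 [hskew]; exact neg_add_cancel _
  exact (smul_eq_zero.mp h_two).resolve_left two_ne_zero

lemma apply_sub_right_eq_of_apply_self (hω : ∀ A : H, ω A A = 0) (A B : H) :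
    ω A (B - A) = ω B (B - A) := by
  rw [eq_comm, ← sub_eq_zero, ← sub_apply, ← map_sub, hω]

lemma norm_apply_sub_right_le (hω : ∀ A : H, ω A A = 0) (x y : H × C) :
    ‖ω x.1 (y.1 - x.1)‖ ≤ ‖ω‖ * min (gNorm x) (gNorm y) * gNorm (y - x) := by
  have h_bound (z : H × C) : ‖ω z.1 (y.1 - x.1)‖ ≤ ‖ω‖ * gNorm z * gNorm (y - x) :=
    calc ‖ω z.1 (y.1 - x.1)‖ ≤ ‖ω‖ * ‖z.1‖ * ‖(y - x).1‖ := ω.le_opNorm₂ _ _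
      _ ≤ ‖ω‖ * gNorm z * gNorm (y - x) := by
        have := gNorm_nonneg z
        gcongr
        exacts [norm_fst_le_gNorm z, norm_fst_le_gNorm (y - x)]
  rcases min_cases (gNorm x) (gNorm y) with ⟨h_min, -⟩ | ⟨h_min, -⟩ <;> rw [h_min]
  · exact h_bound x
  · rw [apply_sub_right_eq_of_apply_self ω hω]
    exact h_bound y

end

section

variable {H C : Type*} [NormedAddCommGroup H] [InnerProductSpace ℝ H]
  [NormedAddCommGroup C] [InnerProductSpace ℝ C] (ω : H →L[ℝ] H →L[ℝ] C)

lemma pathLen_nonneg (w : ℝ → H) (c : ℝ → C) : 0 ≤ pathLen ω w c :=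
  intervalIntegral.integral_nonneg zero_le_one fun _ _ => Real.sqrt_nonneg _

lemma dCM_le_pathLen {x y : H × C} {w : ℝ → H} {c : ℝ → C}
    (hw : ContDiff ℝ 1 w) (hc : ContDiff ℝ 1 c) (hw0 : w 0 = x.1) (hc0 : c 0 = x.2)
    (hw1 : w 1 = y.1) (hc1 : c 1 = y.2) : dCM ω x y ≤ pathLen ω w c :=
  csInf_le ⟨0, by rintro _ ⟨w, c, -, -, -, -, -, -, rfl⟩; exact pathLen_nonneg ω w c⟩
    ⟨w, c, hw, hc, hw0, hc0, hw1, hc1, rfl⟩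

lemma pathLen_segment (hω : ∀ A : H, ω A A = 0) (A B : H) (a b : C) :
    pathLen ω (fun s => A + s • B) (fun s => a + s • b) =
      Real.sqrt (‖B‖ ^ 2 + ‖b - (2:ℝ)⁻¹ • ω A B‖ ^ 2) := by
  simp [pathLen, deriv_smul_const, hω]

lemma dCM_le_segment (hω : ∀ A : H, ω A A = 0) (x y : H × C) :
    dCM ω x y ≤
      Real.sqrt (‖y.1 - x.1‖ ^ 2 + ‖y.2 - x.2 - (2:ℝ)⁻¹ • ω x.1 (y.1 - x.1)‖ ^ 2) := by
  rw [← pathLen_segment ω hω x.1 (y.1 - x.1) x.2 (y.2 - x.2)]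
  refine dCM_le_pathLen ω (by fun_prop) (by fun_prop) ?_ ?_ ?_ ?_ <;> simp

end

theorem dist_le_norm_bound_general
    {H C : Type*} [NormedAddCommGroup H] [InnerProductSpace ℝ H]
    [NormedAddCommGroup C] [InnerProductSpace ℝ C]
    (ω : H →L[ℝ] H →L[ℝ] C)
    (hskew : ∀ A B : H, ω A B = - ω B A) :
    (∀ x y : H × C,
      dCM ω x y ≤ (1 + ‖ω‖ / 2 * min (gNorm x) (gNorm y)) * gNorm (y - x)) ∧
    (∀ x : H × C, dCM ω (0 : H × C) x ≤ gNorm x) := by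
  have hω := apply_self_eq_zero_of_skew ω hskew
  have h_dist (x y : H × C) :
      dCM ω x y ≤ (1 + ‖ω‖ / 2 * min (gNorm x) (gNorm y)) * gNorm (y - x) :=
    calc dCM ω x y
        ≤ Real.sqrt (‖y.1 - x.1‖ ^ 2 + ‖y.2 - x.2 - (2:ℝ)⁻¹ • ω x.1 (y.1 - x.1)‖ ^ 2) :=
          dCM_le_segment ω hω x y
      _ ≤ gNorm (y - x) + ‖(2:ℝ)⁻¹ • ω x.1 (y.1 - x.1)‖ :=
          sqrt_sq_add_norm_sub_sq_le _ _ _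
      _ = gNorm (y - x) + 2⁻¹ * ‖ω x.1 (y.1 - x.1)‖ := by rw [norm_smul]; norm_num
      _ ≤ gNorm (y - x) + 2⁻¹ * (‖ω‖ * min (gNorm x) (gNorm y) * gNorm (y - x)) := by
          gcongr; exact norm_apply_sub_right_le ω hω x y
      _ = (1 + ‖ω‖ / 2 * min (gNorm x) (gNorm y)) * gNorm (y - x) := by ring
  refine ⟨h_dist, fun x => ?_⟩
  simpa [min_eq_left (gNorm_nonneg x)] using h_dist 0 x

/-- `d(x,y) ≤ (1 + (C(ω)/2) min(‖x‖,‖y‖)) ‖y − x‖`; in particular `d(e,x) ≤ ‖x‖`. -/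
theorem dist_le_norm_bound
    {H C : Type*} [NormedAddCommGroup H] [InnerProductSpace ℝ H]
    [TopologicalSpace.SeparableSpace H]
    [NormedAddCommGroup C] [InnerProductSpace ℝ C] [FiniteDimensional ℝ C]
    (ω : H →L[ℝ] H →L[ℝ] C)
    (hskew : ∀ A B : H, ω A B = - ω B A) :
    (∀ x y : H × C,
      dCM ω x y ≤ (1 + ‖ω‖ / 2 * min (gNorm x) (gNorm y)) * gNorm (y - x)) ∧
    (∀ x : H × C, dCM ω (0 : H × C) x ≤ gNorm x) :=
  dist_le_norm_bound_general ω hskew
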